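/- Let k be a natural number, G a graph, P an induced path in G, and (T, λ) a rank decomposition of G of width at most k. For any edge e of T, if (X, Y) is the bipartition of V(P) induced by the two components of T − e, then the induced subgraph P[X] has at most k + 1 connected components. -/

import Mathlib

open SimpleGraph

/-- Sorted list of the tuple set `S^d`: tuples with entries in {1,3} except
the last entry which is in {1,2,3,4}, of length between 1 and `d`,
listed in lexicographic order. -/
def Tl : ℕ → List (List ℕ)
  | 0 => []
  | k+1 => [[1]] ++ (Tl k).map (fun a => 1 :: a) ++ [[2], [3]]
            ++ (Tl k).map (fun a => 3 :: a) ++ [[4]]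

/-- Strict lexicographic order on tuples (a proper prefix is smaller). -/
def lexLt (a b : List ℕ) : Prop := List.Lex (· < ·) a b

def lexLe (a b : List ℕ) : Prop := a = b ∨ lexLt a b

/-- `v` is the successor of `u` in the lexicographic order on `S^d`. -/
def IsSucc (d : ℕ) (u v : List ℕ) : Prop :=
  v ∈ Tl d ∧ lexLt u v ∧ ∀ w ∈ Tl d, lexLt u w → lexLe v w

/-- The interval `[a,b]` in `S^d`. -/
def interval (d : ℕ) (a b : List ℕ) : Set (List ℕ) :=
  {c | c ∈ Tl d ∧ lexLe a c ∧ lexLe c b}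

/-- `[a,b]` is a proper interval: no interior element has length `l(a)` or `l(b)`. -/
def ProperInterval (d : ℕ) (a b : List ℕ) : Prop :=
  a ∈ Tl d ∧ b ∈ Tl d ∧ lexLe a b ∧
  ∀ c ∈ interval d a b, c ≠ a → c ≠ b →
    c.length ≠ a.length ∧ c.length ≠ b.length

/-- The set of left endpoints of flat steps of the interval `[a,b]`. -/
def flatSteps (d : ℕ) (a b : List ℕ) : Set (List ℕ) :=
  {c | c ∈ Tl d ∧ lexLe a c ∧ lexLt c b ∧ ∃ v, IsSucc d c v ∧ v.length = c.length}

/-- Vertices of `G_d`: elements of `S^d`, subdivision vertices, and centers. -/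
inductive Vtx where
  | elt : List ℕ → Vtx
  | sub : ℕ → Fin 2 → Vtx
  | ctr : ℕ → Vtx
deriving DecidableEq

/-- The path `P_d` as a list of vertices: the elements of `S^d` in order,
with two subdivision vertices between consecutive elements of equal length
and one otherwise. -/
def pathList (d : ℕ) : List Vtx :=
  (((Tl d).zipIdx).map Prod.swap).flatMap (fun p =>
    Vtx.elt p.2 :: (match (Tl d)[p.1 + 1]? with
      | none => []
      | some b =>
        if p.2.length = b.length then [Vtx.sub p.1 0, Vtx.sub p.1 1]
        else [Vtx.sub p.1 0]))

/-- `x` and `y` are consecutive in the list `l`. -/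
def ChainAdj {α : Type} (l : List α) (x y : α) : Prop :=
  ∃ i, (l[i]? = some x ∧ l[i+1]? = some y) ∨
       (l[i]? = some y ∧ l[i+1]? = some x)

/-- Adjacency from a center vertex. -/
def ctrAdj (d : ℕ) : Vtx → Vtx → Prop
  | Vtx.ctr k, Vtx.ctr m => k ≠ m ∧ 1 ≤ k ∧ k ≤ d ∧ 1 ≤ m ∧ m ≤ d
  | Vtx.ctr k, Vtx.elt a => 1 ≤ k ∧ k ≤ d ∧ a ∈ Tl d ∧ a.length = k
  | _, _ => False

/-- The vertex set of `G_d`. -/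
def VSet (d : ℕ) : Finset Vtx :=
  (pathList d).toFinset ∪ (Finset.Icc 1 d).image Vtx.ctr

def GdAdj (d : ℕ) (x y : Vtx) : Prop :=
  x ≠ y ∧ (ChainAdj (pathList d) x y ∨ ctrAdj d x y ∨ ctrAdj d y x)

/-- The graph `G_d`. -/
def Gd (d : ℕ) : SimpleGraph {x // x ∈ VSet d} where
  Adj x y := GdAdj d x.1 y.1
  symm := ⟨by
    rintro x y ⟨hne, h⟩
    refine ⟨hne.symm, ?_⟩
    rcases h with ⟨i, hi⟩ | h | h
    · exact Or.inl ⟨i, hi.symm⟩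
    · exact Or.inr (Or.inr h)
    · exact Or.inr (Or.inl h)⟩
  loopless := ⟨fun x h => h.1 rfl⟩

/-- A rank decomposition of a graph `G`: a finite cubic tree together with a
bijection from the vertices of `G` to the leaves of the tree. -/
structure RankDecomp {V : Type} [Fintype V] (G : SimpleGraph V) where
  t : Type
  fin : Fintype t
  tree : SimpleGraph t
  conn : tree.Connected
  acyc : tree.IsAcyclic
  two_le : 2 ≤ Nat.card t
  cubic : ∀ v : t, (tree.neighborSet v).ncard = 1 ∨ (tree.neighborSet v).ncard = 3
  leafEquiv : V ≃ {v : t // (tree.neighborSet v).ncard = 1}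

/-- The set of vertices of `G` whose leaf lies on the side of `a` of
the edge `ab` of the decomposition tree. -/
def RankDecomp.side {V : Type} [Fintype V] {G : SimpleGraph V}
    (D : RankDecomp G) (a b : D.t) : Set V :=
  {x | (D.tree.deleteEdges {s(a, b)}).Reachable (D.leafEquiv x).1 a}

/-- The cutrank function of `G`: the GF(2)-rank of the adjacency submatrix
between `X` and its complement. -/
noncomputable def cutRank {V : Type} [Fintype V] (G : SimpleGraph V) (X : Set V) : ℕ :=
  haveI : Fintype ↥X := Fintype.ofFinite _
  haveI : Fintype ↥(Xᶜ) := Fintype.ofFinite _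
  haveI : DecidableRel G.Adj := Classical.decRel _
  Matrix.rank (Matrix.of (fun (x : ↥X) (y : ↥(Xᶜ)) =>
    if G.Adj x.1 y.1 then (1 : ZMod 2) else 0))

/-- The decomposition `D` has width at most `k`. -/
def RankDecomp.WidthLE {V : Type} [Fintype V] {G : SimpleGraph V}
    (D : RankDecomp G) (k : ℕ) : Prop :=
  ∀ a b : D.t, D.tree.Adj a b → cutRank G (D.side a b) ≤ k

/-- The rank-width of `G`. -/
noncomputable def rankwidth {V : Type} [Fintype V] (G : SimpleGraph V) : ℕ :=
  sInf {k | ∃ D : RankDecomp G, D.WidthLE k}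

/-- `l` is an induced path in `G`: its vertices are distinct and two of them
are adjacent in `G` iff they are consecutive on `l`. -/
def IsInducedPathList {V : Type} (G : SimpleGraph V) (l : List V) : Prop :=
  l.Nodup ∧ ∀ x ∈ l, ∀ y ∈ l, (G.Adj x y ↔ ChainAdj l x y)

/-- The diamond: the complete graph on four vertices minus an edge. -/
def diamond : SimpleGraph (Fin 4) := (⊤ : SimpleGraph (Fin 4)).deleteEdges {s(2, 3)}

/-! Follow the path `l` and record the positions `i` where it leaves `X` (`l[i] ∈ X`,
`l[i + 1] ∉ X`). Each component of `P[X]` other than the one containing the end of the path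
is left right after its last vertex, so there are at most (number of exits) + 1 components.
Because the path is induced, `l[i]` is adjacent to `l[j + 1]` for exits `i ≤ j` only when
`i = j`; hence the adjacency matrix between exit tails and exit heads is triangular with
nonzero diagonal, and the number of exits is at most the cut-rank of `X`. -/

theorem Matrix.card_le_rank_of_isLowerTriangular_submatrix {R m n ι : Type*} [CommRing R]
    [IsDomain R] [Fintype n] [Fintype ι] [LinearOrder ι] (A : Matrix m n R) (r : ι → m)
    (c : ι → n) (hA : (A.submatrix r c).IsLowerTriangular) (hdiag : ∀ i, A (r i) (c i) ≠ 0) :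
    Fintype.card ι ≤ A.rank := by
  classical
  have hdet : (A.submatrix r c).det ≠ 0 := by
    rw [Matrix.det_of_isLowerTriangular _ hA]
    exact Finset.prod_ne_zero_iff.2 fun i _ => hdiag i
  calc Fintype.card ι = (A.submatrix r c).rank := (Matrix.rank_of_det_ne_zero hdet).symm
    _ ≤ A.rank := Matrix.rank_submatrix_le A r c

theorem List.Nodup.chainAdj_getElem_iff {α : Type} {l : List α} (hl : l.Nodup) {i j : ℕ}
    (hi : i < l.length) (hj : j < l.length) :
    ChainAdj l l[i] l[j] ↔ j = i + 1 ∨ i = j + 1 := by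
  have index_eq {k m : ℕ} (hk : k < l.length) (h : l[m]? = some l[k]) : m = k := by
    obtain ⟨hm, hmk⟩ := List.getElem?_eq_some_iff.1 h
    exact (hl.getElem_inj_iff).1 hmk
  constructor
  · rintro ⟨k, ⟨hki, hkj⟩ | ⟨hkj, hki⟩⟩
    · exact Or.inl ((index_eq hj hkj).symm.trans (congrArg (· + 1) (index_eq hi hki)))
    · exact Or.inr ((index_eq hi hki).symm.trans (congrArg (· + 1) (index_eq hj hkj)))
  · rintro (rfl | rfl)
    · exact ⟨i, Or.inl ⟨List.getElem?_eq_getElem hi, List.getElem?_eq_getElem hj⟩⟩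
    · exact ⟨j, Or.inr ⟨List.getElem?_eq_getElem hj, List.getElem?_eq_getElem hi⟩⟩

open Classical in
noncomputable def exitIndices {V : Type} (l : List V) (X : Set V) : Finset (Fin (l.length - 1)) :=
  {i | l[i.1] ∈ X ∧ l[i.1 + 1] ∉ X}

theorem mem_exitIndices {V : Type} {l : List V} {X : Set V} {i : Fin (l.length - 1)} :
    i ∈ exitIndices l X ↔ l[i.1] ∈ X ∧ l[i.1 + 1] ∉ X := by
  simp [exitIndices]

theorem exists_last_getElem_mem_connectedComponent {V : Type} {G : SimpleGraph V} {l : List V}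
    {S : Set V} (hS : S ⊆ {x | x ∈ l}) (C : (G.induce S).ConnectedComponent) :
    ∃ (i : ℕ) (hi : i < l.length) (hiS : l[i] ∈ S),
      (G.induce S).connectedComponentMk ⟨l[i], hiS⟩ = C ∧
      ∀ (j : ℕ) (hj : j < l.length) (hjS : l[j] ∈ S),
        (G.induce S).connectedComponentMk ⟨l[j], hjS⟩ = C → j ≤ i := by
  classical
  set P : ℕ → Prop := fun i => ∃ (hi : i < l.length) (hiS : l[i] ∈ S),
    (G.induce S).connectedComponentMk ⟨l[i], hiS⟩ = C
  have hne : ((Finset.range l.length).filter P).Nonempty := by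
    obtain ⟨v, rfl⟩ := C.exists_rep
    obtain ⟨i, hi, hiv⟩ := List.getElem_of_mem (hS v.2)
    refine ⟨i, Finset.mem_filter.2 ⟨Finset.mem_range.2 hi, hi, hiv ▸ v.2, ?_⟩⟩
    simp only [hiv]
    rfl
  obtain ⟨i, hiP, hmax⟩ := Finset.exists_max_image _ id hne
  obtain ⟨hi, hiS, hiC⟩ := (Finset.mem_filter.1 hiP).2
  exact ⟨i, hi, hiS, hiC, fun j hj hjS hjC =>
    hmax j (Finset.mem_filter.2 ⟨Finset.mem_range.2 hj, hj, hjS, hjC⟩)⟩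

namespace IsInducedPathList

variable {V : Type} {G : SimpleGraph V} {l : List V}

theorem adj_getElem_iff (hl : IsInducedPathList G l) {i j : ℕ} (hi : i < l.length)
    (hj : j < l.length) : G.Adj l[i] l[j] ↔ j = i + 1 ∨ i = j + 1 :=
  (hl.2 _ (List.getElem_mem hi) _ (List.getElem_mem hj)).trans (hl.1.chainAdj_getElem_iff hi hj)

theorem adj_getElem_succ (hl : IsInducedPathList G l) {i : ℕ} (hi : i + 1 < l.length) :
    G.Adj l[i] l[i + 1] :=
  (hl.adj_getElem_iff _ hi).2 (Or.inl rfl)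

theorem card_exitIndices_le_cutRank [Fintype V] (hl : IsInducedPathList G l) (X : Set V) :
    (exitIndices l X).card ≤ cutRank G X := by
  rw [← Fintype.card_coe, cutRank]
  let := Fintype.ofFinite ↥Xᶜ
  refine Matrix.card_le_rank_of_isLowerTriangular_submatrix _
    (fun i => ⟨l[i.1.1], (mem_exitIndices.1 i.2).1⟩)
    (fun i => ⟨l[i.1.1 + 1], (mem_exitIndices.1 i.2).2⟩) ?_ ?_
  · intro i j (hij : i < j)
    have hnadj : ¬ G.Adj l[i.1.1] l[j.1.1 + 1] := by
      rw [hl.adj_getElem_iff]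
      have : i.1.1 < j.1.1 := hij
      omega
    simp [hnadj]
  · intro i
    simp [hl.adj_getElem_succ]

theorem card_connectedComponent_induce_le (hl : IsInducedPathList G l) (X : Set V) :
    Nat.card (G.induce ({x | x ∈ l} ∩ X)).ConnectedComponent ≤
      (exitIndices l X).card + 1 := by
  set S : Set V := {x | x ∈ l} ∩ X
  choose last hlast hlastS hlastC hmax using
    exists_last_getElem_mem_connectedComponent (G := G) (S := S) Set.inter_subset_left
  set T : Finset ℕ := insert (l.length - 1) ((exitIndices l X).map Fin.valEmbedding)
  -- the successor of the last vertex of a component cannot lie in `X`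
  have hmem (C) : last C ∈ T := by
    by_cases hend : last C + 1 < l.length
    · refine Finset.mem_insert_of_mem (Finset.mem_map.2
        ⟨⟨last C, by omega⟩, mem_exitIndices.2 ⟨(hlastS C).2, fun hX => ?_⟩, rfl⟩)
      have hadj : (G.induce S).Adj ⟨_, hlastS C⟩
          ⟨l[last C + 1], List.getElem_mem hend, hX⟩ :=
        hl.adj_getElem_succ hend
      have := hmax C _ hend ⟨List.getElem_mem hend, hX⟩
        ((SimpleGraph.ConnectedComponent.connectedComponentMk_eq_of_adj hadj).symm.trans
          (hlastC C))
      omega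
    · exact Finset.mem_insert.2 (Or.inl (by have := hlast C; omega))
  have hinj : Function.Injective fun C => (⟨last C, hmem C⟩ : T) := by
    intro C C' h
    have hidx : last C = last C' := congrArg Subtype.val h
    rw [← hlastC C, ← hlastC C']
    congr 1
    exact Subtype.ext (by simp only [hidx])
  calc Nat.card (G.induce S).ConnectedComponent ≤ Nat.card T :=
        Nat.card_le_card_of_injective _ hinj
    _ ≤ (exitIndices l X).card + 1 := by
        rw [Nat.card_eq_finsetCard, ← Finset.card_map Fin.valEmbedding]
        exact Finset.card_insert_le _ _

end IsInducedPathList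

/-- In a rank decomposition of width at most `k`, any edge of the
tree splits an induced path `P` of `G` into at most `k+1` components on each side. -/
theorem stmt0 {V : Type} [Fintype V] (G : SimpleGraph V) (k : ℕ)
    (l : List V) (hl : IsInducedPathList G l)
    (D : RankDecomp G) (hw : D.WidthLE k)
    (a b : D.t) (hab : D.tree.Adj a b) :
    Nat.card ((G.induce ({x | x ∈ l} ∩ D.side a b)).ConnectedComponent) ≤ k + 1 :=
  (hl.card_connectedComponent_induce_le _).trans
    (Nat.add_le_add_right ((hl.card_exitIndices_le_cutRank _).trans (hw a b hab)) 1)
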